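/- arXiv:2205.12363 — 3 statements merged into one kernel-verified Lean document; each statement's English description precedes it below -/
import Mathlib

section
/- With W_q(n, t, k) the size of the intersection of two radius-t Hamming balls at center distance k, one has the exact formula W_q(n,t,k) = ∑_{r=0}^{k} ∑_{s=0}^{k−r} C(k,r)·C(k−r,s)·(q−2)^{k−r−s}·V_q(n−k, t−max{k−r, k−s}), where V_q(m, j) = 0 when j < 0. -/
/-- The Hamming ball of radius `r` around `x` in `[q]^n`. -/
def ball {q n : ℕ} (x : Fin n → Fin q) (r : ℕ) : Finset (Fin n → Fin q) :=
  Finset.univ.filter (fun y => hammingDist x y ≤ r)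

/-- The standard vector whose first `k` coordinates are `1` and the rest are `0`. -/
def stdVec (q n : ℕ) [NeZero q] (k : ℕ) : Fin n → Fin q :=
  fun i => if (i : ℕ) < k then 1 else 0

/-- `W q n t k`: the size of the intersection of two radius-`t` Hamming balls in `[q]^n`
whose centers are at Hamming distance `k` (for `k ≤ n` and `q ≥ 2`). -/
def W (q n : ℕ) [NeZero q] (t k : ℕ) : ℕ :=
  (ball (stdVec q n 0) t ∩ ball (stdVec q n k) t).card

/-- `Vz q m j`: Hamming ball volume allowing a (possibly negative) integer radius;
it is `0` when `j < 0`. -/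
def Vz (q m : ℕ) (j : ℤ) : ℕ :=
  if j < 0 then 0 else ∑ i ∈ Finset.range (j.toNat + 1), Nat.choose m i * (q - 1) ^ i

/-!
Split the coordinates into the first `k`, where the two centres `0⋯0 0⋯0` and `1⋯1 0⋯0`
differ, and the remaining `m = n - k`, where they agree. If the head `z ∈ [q]^k` has `r`
zeros and `s` ones, it lies at distances `k - r` and `k - s` from the two heads, so the
admissible tails are exactly a Hamming ball of radius `t - max (k - r) (k - s)` in `[q]^m`
(empty when that radius is negative). It remains to count the heads with `r` zeros and `s`
ones: choose the zeros, then the ones, then one of the `q - 2` other symbols everywhere else.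
-/

open Finset

section FiberCounting
variable {ι α : Type*} [Fintype ι] [DecidableEq α]

lemma hammingDist_const_add_card_filter_eq (a : α) (w : ι → α) :
    hammingDist (fun _ => a) w + #{i | w i = a} = Fintype.card ι := by
  rw [add_comm, ← Finset.card_univ,
    ← card_filter_add_card_filter_not (s := univ) (fun i => w i = a)]
  congr 1
  simp only [hammingDist, ne_comm]

variable [DecidableEq ι] [Fintype α]

omit [DecidableEq α] in
lemma card_filter_forall_apply (P : ι → α → Prop) [∀ i, DecidablePred (P i)] :
    #{w : ι → α | ∀ i, P i (w i)} = ∏ i, #{x | P i x} := by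
  rw [← Fintype.card_piFinset]
  congr 1
  ext w
  simp [Fintype.mem_piFinset]

lemma card_filter_filter_ne_eq (a : α) (A : Finset ι) :
    #{w : ι → α | ({i | a ≠ w i} : Finset ι) = A} = (Fintype.card α - 1) ^ #A := by
  have hfib : ∀ i, #{x | a ≠ x ↔ i ∈ A} = if i ∈ A then Fintype.card α - 1 else 1 := by
    intro i
    split_ifs with hi
    · simp [hi, filter_ne, card_erase_of_mem]
    · simp [hi, filter_eq]
  calc #{w : ι → α | ({i | a ≠ w i} : Finset ι) = A}
      = #{w : ι → α | ∀ i, a ≠ w i ↔ i ∈ A} := by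
        congr 1; exact filter_congr fun w _ => by simp [Finset.ext_iff]
    _ = (Fintype.card α - 1) ^ #A := by
        rw [card_filter_forall_apply (fun i x => a ≠ x ↔ i ∈ A),
          prod_congr rfl fun i _ => hfib i, prod_ite_mem, univ_inter, prod_const]

lemma card_filter_filter_eq_and_filter_eq {a b : α} (hab : a ≠ b) {A B : Finset ι}
    (hAB : Disjoint A B) :
    #{w : ι → α | ({i | w i = a} : Finset ι) = A ∧ ({i | w i = b} : Finset ι) = B} =
      (Fintype.card α - 2) ^ (Fintype.card ι - #A - #B) := by
  have hfib : ∀ i, #{x | (x = a ↔ i ∈ A) ∧ (x = b ↔ i ∈ B)} =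
      if i ∈ (A ∪ B)ᶜ then Fintype.card α - 2 else 1 := by
    intro i
    by_cases hA : i ∈ A
    · have hB : i ∉ B := disjoint_left.mp hAB hA
      rw [if_neg (by simp [hA]), card_eq_one]
      exact ⟨a, by ext; grind⟩
    by_cases hB : i ∈ B
    · rw [if_neg (by simp [hB]), card_eq_one]
      exact ⟨b, by ext; grind⟩
    · have : ({x | x ≠ a ∧ x ≠ b} : Finset α) = {a, b}ᶜ := by ext; simp
      simp only [hA, hB, iff_false, mem_compl, mem_union, or_self, not_false_eq_true, if_true]
      rw [this, card_compl, card_pair hab]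
  calc #{w : ι → α | ({i | w i = a} : Finset ι) = A ∧ ({i | w i = b} : Finset ι) = B}
      = #{w : ι → α | ∀ i, (w i = a ↔ i ∈ A) ∧ (w i = b ↔ i ∈ B)} := by
        congr 1; exact filter_congr fun w _ => by simp [Finset.ext_iff, forall_and]
    _ = _ := by
        rw [card_filter_forall_apply (fun i x => (x = a ↔ i ∈ A) ∧ (x = b ↔ i ∈ B)),
          prod_congr rfl fun i _ => hfib i, prod_ite_mem, univ_inter,
          prod_const, card_compl, card_union_of_disjoint hAB, Nat.sub_sub]

lemma card_filter_hammingDist_const_eq (a : α) (r : ℕ) :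
    #{w : ι → α | hammingDist (fun _ => a) w = r} =
      (Fintype.card ι).choose r * (Fintype.card α - 1) ^ r := by
  rw [card_eq_sum_card_fiberwise (f := fun w => ({i | a ≠ w i} : Finset ι))
    (t := powersetCard r univ) fun w hw => by simpa [hammingDist] using hw]
  rw [sum_congr rfl fun A hA => ?_, sum_const, card_powersetCard, card_univ, smul_eq_mul]
  rw [mem_powersetCard_univ] at hA
  rw [filter_filter, ← hA, ← card_filter_filter_ne_eq a A]
  congr 1
  exact filter_congr fun w _ => and_iff_right_of_imp fun h => by rw [← h]; rfl

lemma card_filter_hammingDist_const_le (a : α) (j : ℕ) :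
    #{w : ι → α | hammingDist (fun _ => a) w ≤ j} =
      ∑ i ∈ range (j + 1), (Fintype.card ι).choose i * (Fintype.card α - 1) ^ i := by
  rw [card_eq_sum_card_fiberwise (f := fun w => hammingDist (fun _ => a) w)
    (t := range (j + 1)) fun w hw => by simpa [Nat.lt_succ_iff] using hw]
  refine sum_congr rfl fun i hi => ?_
  rw [filter_filter, ← card_filter_hammingDist_const_eq a i]
  congr 1
  exact filter_congr fun w _ => by simp only [mem_range] at hi; omega

lemma card_filter_add_hammingDist_le_eq_Vz (a : α) (t c d : ℕ) :
    #{w : ι → α | c + hammingDist (fun _ => a) w ≤ t ∧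
      d + hammingDist (fun _ => a) w ≤ t} =
      Vz (Fintype.card α) (Fintype.card ι) ((t : ℤ) - max (c : ℤ) d) := by
  rw [Vz, ← Nat.cast_max]
  split_ifs with h
  · rw [card_eq_zero, filter_eq_empty_iff]
    intro w _
    omega
  · rw [← card_filter_hammingDist_const_le a]
    congr 1
    exact filter_congr fun w _ => by omega

lemma card_filter_card_eq_and_card_eq {a b : α} (hab : a ≠ b) (r s : ℕ) :
    #{w : ι → α | #{i | w i = a} = r ∧ #{i | w i = b} = s} =
      (Fintype.card ι).choose r * (Fintype.card ι - r).choose s *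
        (Fintype.card α - 2) ^ (Fintype.card ι - r - s) := by
  set S : Finset (ι → α) := {w | #{i | w i = a} = r ∧ #{i | w i = b} = s}
  set t := (powersetCard r (univ : Finset ι)).sigma fun A => powersetCard s (univ \ A)
  let g (w : ι → α) : (_ : Finset ι) × Finset ι :=
    ⟨univ.filter (w · = a), univ.filter (w · = b)⟩
  have hmaps : ∀ w ∈ S, g w ∈ t := by
    intro w hw
    simp only [S, mem_filter, mem_univ, true_and] at hw
    simp only [g, t, mem_sigma, mem_powersetCard, hw, and_true]
    refine ⟨subset_univ _, fun i => ?_⟩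
    simp only [mem_filter, mem_sdiff, mem_univ, true_and]
    rintro rfl
    exact hab.symm
  have hfiber : ∀ p ∈ t,
      #{w ∈ S | g w = p} = (Fintype.card α - 2) ^ (Fintype.card ι - r - s) := by
    rintro ⟨A, B⟩ hp
    simp only [t, mem_sigma, mem_powersetCard] at hp
    obtain ⟨⟨-, rfl⟩, hBA, rfl⟩ := hp
    rw [filter_filter, ← card_filter_filter_eq_and_filter_eq hab (disjoint_sdiff.mono_right hBA)]
    congr 1
    refine filter_congr fun w _ => ?_
    simp only [g, Sigma.mk.inj_iff, heq_eq_eq]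
    constructor
    · exact And.right
    · rintro ⟨rfl, rfl⟩
      exact ⟨⟨rfl, rfl⟩, rfl, rfl⟩
  have hcard : #t = (Fintype.card ι).choose r * (Fintype.card ι - r).choose s := by
    rw [card_sigma, sum_congr rfl fun A hA => by
      rw [card_powersetCard, card_univ_sdiff, (mem_powersetCard_univ.mp hA)]]
    rw [sum_const, card_powersetCard, card_univ, smul_eq_mul]
  rw [card_eq_sum_card_fiberwise hmaps, sum_congr rfl hfiber, sum_const, hcard, smul_eq_mul]

lemma sum_card_filter_eq_sum_choose {M : Type*} [AddCommMonoid M] {a b : α} (hab : a ≠ b)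
    (f : ℕ → ℕ → M) :
    ∑ w : ι → α, f #{i | w i = a} #{i | w i = b} =
      ∑ r ∈ range (Fintype.card ι + 1), ∑ s ∈ range (Fintype.card ι - r + 1),
        ((Fintype.card ι).choose r * (Fintype.card ι - r).choose s *
          (Fintype.card α - 2) ^ (Fintype.card ι - r - s)) • f r s := by
  have hmaps : ∀ w ∈ (univ : Finset (ι → α)),
      (⟨#{i | w i = a}, #{i | w i = b}⟩ : (_ : ℕ) × ℕ) ∈
        (range (Fintype.card ι + 1)).sigma fun r => range (Fintype.card ι - r + 1) := by
    intro w _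
    have hdisj : Disjoint ({i | w i = a} : Finset ι) ({i | w i = b} : Finset ι) :=
      disjoint_filter.2 fun i _ ha hb => hab (ha.symm.trans hb)
    have := (card_union_of_disjoint hdisj).symm.trans_le (card_le_univ _)
    simp only [mem_sigma, mem_range]
    omega
  rw [← sum_fiberwise_of_maps_to hmaps, sum_sigma]
  refine sum_congr rfl fun r _ => sum_congr rfl fun s _ => ?_
  rw [← card_filter_card_eq_and_card_eq hab, ← sum_const]
  have hfiber : ∀ w : ι → α,
      (⟨#{i | w i = a}, #{i | w i = b}⟩ : (_ : ℕ) × ℕ) = ⟨r, s⟩ ↔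
        #{i | w i = a} = r ∧ #{i | w i = b} = s := by
    simp
  rw [filter_congr fun w _ => hfiber w]
  exact sum_congr rfl fun w hw => by rw [(mem_filter.1 hw).2.1, (mem_filter.1 hw).2.2]

end FiberCounting

lemma Fin.zero_ne_one_of_two_le {q : ℕ} [NeZero q] (hq : 2 ≤ q) : (0 : Fin q) ≠ 1 := by
  intro h
  have := congrArg Fin.val h
  simp [Nat.mod_eq_of_lt hq] at this

section FinAppend
variable {α : Type*} {k m : ℕ}

lemma hammingDist_append [DecidableEq α] (x z : Fin k → α) (y w : Fin m → α) :
    hammingDist (Fin.append x y) (Fin.append z w) = hammingDist x z + hammingDist y w := by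
  simp only [hammingDist, card_filter, Fin.sum_univ_add, Fin.append_left, Fin.append_right]

lemma card_filter_eq_sum_card_filter_append [Fintype α] (P : (Fin (k + m) → α) → Prop)
    [DecidablePred P] :
    #{y | P y} = ∑ z : Fin k → α, #{w : Fin m → α | P (Fin.append z w)} := by
  simp only [card_filter]
  rw [← (Fin.appendEquiv k m).sum_comp, Fintype.sum_prod_type]
  rfl

end FinAppend

lemma stdVec_zero_eq_append (q k m : ℕ) [NeZero q] :
    stdVec q (k + m) 0 = Fin.append (fun _ => 0) (fun _ => 0) := by
  funext i
  refine Fin.addCases (fun j => ?_) (fun j => ?_) i <;> simp [stdVec]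

lemma stdVec_eq_append (q k m : ℕ) [NeZero q] :
    stdVec q (k + m) k = Fin.append (fun _ => 1) (fun _ => 0) := by
  funext i
  refine Fin.addCases (fun j => ?_) (fun j => ?_) i <;> simp [stdVec]

lemma W_add_eq_sum_Vz (q k m t : ℕ) [NeZero q] :
    W q (k + m) t k = ∑ z : Fin k → Fin q,
      Vz q m ((t : ℤ) - max (hammingDist (fun _ => 0) z : ℤ) (hammingDist (fun _ => 1) z)) := by
  rw [W, ball, ball, ← filter_and, card_filter_eq_sum_card_filter_append, stdVec_zero_eq_append,
    stdVec_eq_append]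
  refine sum_congr rfl fun z _ => ?_
  simp only [hammingDist_append]
  rw [card_filter_add_hammingDist_le_eq_Vz, Fintype.card_fin, Fintype.card_fin]

theorem stmt9_general (q n t k : ℕ) [NeZero q] (hq : 2 ≤ q) (hkn : k ≤ n) :
    W q n t k =
      ∑ r ∈ Finset.range (k + 1), ∑ s ∈ Finset.range (k - r + 1),
        Nat.choose k r * Nat.choose (k - r) s * (q - 2) ^ (k - r - s) *
          Vz q (n - k) ((t : ℤ) - max ((k : ℤ) - r) ((k : ℤ) - s)) := by
  obtain ⟨m, rfl⟩ := Nat.exists_eq_add_of_le hkn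
  have hdist (c : Fin q) (z : Fin k → Fin q) :
      (hammingDist (fun _ => c) z : ℤ) = k - #{i | z i = c} := by
    have := hammingDist_const_add_card_filter_eq c z
    rw [Fintype.card_fin] at this
    omega
  simp only [Nat.add_sub_cancel_left, W_add_eq_sum_Vz, hdist]
  simpa [Fintype.card_fin] using
    sum_card_filter_eq_sum_choose (ι := Fin k) (Fin.zero_ne_one_of_two_le hq)
      fun r s => Vz q m ((t : ℤ) - max ((k : ℤ) - r) ((k : ℤ) - s))

theorem stmt9 (q n t k : ℕ) [NeZero q] (hq : 2 ≤ q) (hn : 1 ≤ n)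
    (hkn : k ≤ n) (hkt : k ≤ 2 * t) :
    W q n t k =
      ∑ r ∈ Finset.range (k + 1), ∑ s ∈ Finset.range (k - r + 1),
        Nat.choose k r * Nat.choose (k - r) s * (q - 2) ^ (k - r - s) *
          Vz q (n - k) ((t : ℤ) - max ((k : ℤ) - r) ((k : ℤ) - s)) :=
  stmt9_general q n t k hq hkn
end

section
/- (Supersaturation, weak form) Suppose 1 ≤ t ≤ n/2 and S ⊆ [q]^n satisfies |S| ≥ 2·q^n/V_q(n, t). Let E be the set of unordered pairs of distinct elements of S at Hamming distance at most 2t. Then |E| ≥ (q−1)n·|S|²·V_q(n,t) / (10·q·t·q^n); in particular |E| ≥ n·|S|²·V_q(n,t)/(20·t·q^n). -/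
/-- Volume of the q-ary Hamming ball of radius `r` in dimension `m`. -/
def V (q m r : ℕ) : ℕ := ∑ j ∈ Finset.range (r + 1), Nat.choose m j * (q - 1) ^ j

/-- Hamming distance as a function on unordered pairs. -/
def hdist2 {q n : ℕ} : Sym2 (Fin n → Fin q) → ℕ :=
  Sym2.lift ⟨fun a b => hammingDist a b, fun a b => hammingDist_comm a b⟩

/-!
Let `K x` be the number of words of `S` within distance `t` of `x`. Then `∑ K = |S| V` and
`∑ K² = ∑_{a, b ∈ S} |B(a, t) ∩ B(b, t)|`. The diagonal contributes `|S| V`, pairs at distance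
`> 2t` nothing, and a pair `a ≠ b` at most `2 (q - 1) V_q(n - 1, t - 1) ≤ 2 t V / n`: a common point
of both balls differs from `a` or from `b` at a coordinate where `a` and `b` differ. Cauchy–Schwarz
gives `(|S| V)² ≤ qⁿ ∑ K²`, and `|S| V ≥ 2 qⁿ` lets the diagonal term be absorbed, leaving
`n |S|² V ≤ 8 t qⁿ |E|`.
-/

open Finset

lemma V_pos (q m r : ℕ) : 0 < V q m r :=
  sum_pos' (fun _ _ => Nat.zero_le _) ⟨0, by simp⟩

@[simp] lemma V_zero_left (q r : ℕ) : V q 0 r = 1 := by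
  simp [V, sum_range_succ']

@[simp] lemma V_zero_right (q m : ℕ) : V q m 0 = 1 := by
  simp [V]

lemma V_succ_succ (q m r : ℕ) : V q (m + 1) (r + 1) = V q m (r + 1) + (q - 1) * V q m r := by
  have pascal : ∀ j, (m + 1).choose (j + 1) * (q - 1) ^ (j + 1) =
      m.choose (j + 1) * (q - 1) ^ (j + 1) + (q - 1) * (m.choose j * (q - 1) ^ j) := by
    intro j
    rw [Nat.choose_succ_succ']
    ring
  rw [V, V, V, sum_range_succ', sum_range_succ' _ (r + 1), mul_sum]
  simp only [pascal, sum_add_distrib, Nat.choose_zero_right]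
  ring

lemma sub_one_mul_succ_mul_V_le (q m r : ℕ) :
    (q - 1) * ((m + 1) * V q m r) ≤ (r + 1) * V q (m + 1) (r + 1) :=
  calc (q - 1) * ((m + 1) * V q m r)
      = ∑ j ∈ range (r + 1), (j + 1) * ((m + 1).choose (j + 1) * (q - 1) ^ (j + 1)) := by
        simp only [V, mul_sum]
        refine sum_congr rfl fun j _ => ?_
        rw [← mul_assoc (m + 1), Nat.add_one_mul_choose_eq]
        ring
    _ ≤ ∑ j ∈ range (r + 1), (r + 1) * ((m + 1).choose (j + 1) * (q - 1) ^ (j + 1)) :=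
        sum_le_sum fun j hj => Nat.mul_le_mul_right _ (by simpa using hj)
    _ ≤ (r + 1) * V q (m + 1) (r + 1) := by
        rw [← mul_sum, V, sum_range_succ' _ (r + 1)]
        exact Nat.mul_le_mul_left _ (Nat.le_add_right _ _)

section DoubleCounting

variable {α γ : Type*} [Fintype γ] [DecidableEq γ] (B : α → Finset γ) (S : Finset α)

lemma sum_card_filter_mem : ∑ x, #{a ∈ S | x ∈ B a} = ∑ a ∈ S, #(B a) := by
  simp only [card_eq_sum_ones, sum_filter]
  rw [sum_comm]
  simp

lemma sum_sq_card_filter_mem :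
    ∑ x, #{a ∈ S | x ∈ B a} ^ 2 = ∑ a ∈ S, ∑ b ∈ S, #(B a ∩ B b) := by
  simp only [card_eq_sum_ones, sum_filter, sq, sum_mul_sum, ite_zero_mul_ite_zero, mul_one]
  rw [sum_comm]
  refine sum_congr rfl fun a _ => ?_
  rw [sum_comm]
  simp [← mem_inter]

end DoubleCounting

lemma card_offDiag_filter_eq_two_mul {α : Type*} [DecidableEq α] (s : Finset α)
    (p : Sym2 α → Prop) [DecidablePred p] :
    #{x ∈ s.offDiag | p s(x.1, x.2)} = 2 * #{e ∈ s.sym2 | ¬ e.IsDiag ∧ p e} := by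
  set T := {x ∈ s.offDiag | p s(x.1, x.2)}
  have himage : T.image Sym2.mk.uncurry = {e ∈ s.sym2 | ¬ e.IsDiag ∧ p e} := by
    ext e
    induction e using Sym2.ind with
    | _ a b =>
      simp only [T, mem_image, mem_filter, mem_offDiag, mk_mem_sym2_iff, Sym2.mk_isDiag_iff]
      constructor
      · rintro ⟨⟨x, y⟩, ⟨⟨hx, hy, hxy⟩, hp⟩, he⟩
        rw [Function.uncurry_apply_pair, Sym2.eq_iff] at he
        rcases he with ⟨rfl, rfl⟩ | ⟨rfl, rfl⟩
        · exact ⟨⟨hx, hy⟩, hxy, hp⟩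
        · exact ⟨⟨hy, hx⟩, Ne.symm hxy, Sym2.eq_swap ▸ hp⟩
      · rintro ⟨⟨ha, hb⟩, hab, hp⟩
        exact ⟨(a, b), ⟨⟨ha, hb, hab⟩, hp⟩, rfl⟩
  rw [card_eq_sum_card_image Sym2.mk.uncurry T, himage, mul_comm, ← smul_eq_mul, ← sum_const]
  refine sum_congr rfl fun e he => ?_
  induction e using Sym2.ind with
  | _ a b =>
    simp only [mem_filter, mk_mem_sym2_iff, Sym2.mk_isDiag_iff] at he
    obtain ⟨⟨ha, hb⟩, hab, hp⟩ := he
    have hfiber : {x ∈ T | Sym2.mk.uncurry x = s(a, b)} = {(a, b), (b, a)} := by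
      ext ⟨x, y⟩
      simp only [T, mem_filter, mem_offDiag, mem_insert, mem_singleton, Prod.mk.injEq,
        Function.uncurry_apply_pair, Sym2.eq_iff]
      constructor
      · exact fun h => h.2
      · rintro (⟨rfl, rfl⟩ | ⟨rfl, rfl⟩)
        · exact ⟨⟨⟨ha, hb, hab⟩, hp⟩, Or.inl ⟨rfl, rfl⟩⟩
        · exact ⟨⟨⟨hb, ha, Ne.symm hab⟩, Sym2.eq_swap ▸ hp⟩, Or.inr ⟨rfl, rfl⟩⟩
    rw [hfiber, card_pair fun h => hab (Prod.mk.inj h).1]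

section HammingBall

variable {ι β : Type*} [Fintype ι] [DecidableEq ι] [Fintype β] [DecidableEq β]

def hammingBall (a : ι → β) (r : ℕ) : Finset (ι → β) := {z | hammingDist z a ≤ r}

@[simp] lemma mem_hammingBall {a z : ι → β} {r : ℕ} :
    z ∈ hammingBall a r ↔ hammingDist z a ≤ r := by
  simp [hammingBall]

@[simp] lemma hammingBall_zero (a : ι → β) : hammingBall a 0 = {a} := by
  ext z
  simp

lemma disjoint_hammingBall {a b : ι → β} {r s : ℕ} (h : r + s < hammingDist a b) :
    Disjoint (hammingBall a r) (hammingBall b s) := by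
  refine disjoint_left.mpr fun z hza hzb => ?_
  have htri := hammingDist_triangle a z b
  rw [hammingDist_comm a z] at htri
  simp only [mem_hammingBall] at hza hzb
  omega

end HammingBall

section Supersaturation

variable {β : Type*} [DecidableEq β] {n : ℕ}

lemma hammingDist_eq_ite_add_removeNth (i : Fin (n + 1)) (x y : Fin (n + 1) → β) :
    hammingDist x y =
      (if x i = y i then 0 else 1) + hammingDist (i.removeNth x) (i.removeNth y) := by
  rw [hammingDist, hammingDist, card_filter, card_filter, Fin.sum_univ_succAbove _ i]
  simp only [ne_eq, ite_not]
  rfl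

variable [Fintype β]

lemma card_filter_hammingBall_apply_eq (i : Fin (n + 1)) (a : Fin (n + 1) → β) (r : ℕ) :
    #{z ∈ hammingBall a r | z i = a i} = #(hammingBall (i.removeNth a) r) :=
  calc _ = #(({a i} : Finset β) ×ˢ hammingBall (i.removeNth a) r) :=
        card_equiv (Fin.insertNthEquiv (fun _ => β) i).symm fun z => by
          by_cases h : z i = a i
          · simp [hammingDist_eq_ite_add_removeNth i z a, h]
          · simp [h, Ne.symm h]
    _ = _ := by simp

lemma card_filter_hammingBall_apply_ne (i : Fin (n + 1)) (a : Fin (n + 1) → β) (r : ℕ) :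
    #{z ∈ hammingBall a (r + 1) | z i ≠ a i} =
      (Fintype.card β - 1) * #(hammingBall (i.removeNth a) r) :=
  calc _ = #(({c | c ≠ a i} : Finset β) ×ˢ hammingBall (i.removeNth a) r) :=
        card_equiv (Fin.insertNthEquiv (fun _ => β) i).symm fun z => by
          by_cases h : z i = a i
          · simp [h]
          · simp [hammingDist_eq_ite_add_removeNth i z a, h, Nat.add_comm 1]
    _ = _ := by simp [card_product, filter_ne', card_erase_of_mem]

theorem card_hammingBall : ∀ {n : ℕ} (a : Fin n → β) (r : ℕ),
    #(hammingBall a r) = V (Fintype.card β) n r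
  | 0, a, r => by
    rw [V_zero_left, card_eq_one]
    exact ⟨a, by ext z; simp [Subsingleton.elim z a]⟩
  | n + 1, a, 0 => by simp
  | n + 1, a, r + 1 => by
    rw [← card_filter_add_card_filter_not (s := hammingBall a (r + 1)) (fun z => z 0 = a 0)]
    simp only [← ne_eq]
    rw [card_filter_hammingBall_apply_eq, card_filter_hammingBall_apply_ne, card_hammingBall,
      card_hammingBall, V_succ_succ]

lemma card_hammingBall_inter_le {n : ℕ} {a b : Fin (n + 1) → β} (hab : a ≠ b) (r : ℕ) :
    #(hammingBall a (r + 1) ∩ hammingBall b (r + 1)) ≤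
      2 * ((Fintype.card β - 1) * V (Fintype.card β) n r) := by
  obtain ⟨i, hi⟩ := Function.ne_iff.mp hab
  have hsub : hammingBall a (r + 1) ∩ hammingBall b (r + 1) ⊆
      {z ∈ hammingBall a (r + 1) | z i ≠ a i} ∪ {z ∈ hammingBall b (r + 1) | z i ≠ b i} := by
    intro z hz
    rw [mem_inter] at hz
    by_cases h : z i = a i
    · exact mem_union_right _ (mem_filter.mpr ⟨hz.2, h ▸ hi⟩)
    · exact mem_union_left _ (mem_filter.mpr ⟨hz.1, h⟩)
  calc _ ≤ _ := card_le_card hsub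
    _ ≤ _ := card_union_le _ _
    _ = _ := by
      rw [card_filter_hammingBall_apply_ne, card_filter_hammingBall_apply_ne, card_hammingBall,
        card_hammingBall, two_mul]

lemma mul_card_hammingBall_inter_le : ∀ {n : ℕ} {a b : Fin n → β}, a ≠ b → ∀ r : ℕ,
    n * #(hammingBall a r ∩ hammingBall b r) ≤ 2 * r * V (Fintype.card β) n r
  | 0, _, _, _, _ => by simp
  | n + 1, a, b, hab, 0 => by simp [hab]
  | n + 1, a, b, hab, r + 1 =>
    calc (n + 1) * #(hammingBall a (r + 1) ∩ hammingBall b (r + 1))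
        ≤ (n + 1) * (2 * ((Fintype.card β - 1) * V (Fintype.card β) n r)) := by
          gcongr
          exact card_hammingBall_inter_le hab r
      _ = 2 * ((Fintype.card β - 1) * ((n + 1) * V (Fintype.card β) n r)) := by ring
      _ ≤ 2 * ((r + 1) * V (Fintype.card β) (n + 1) (r + 1)) :=
          Nat.mul_le_mul_left 2 (sub_one_mul_succ_mul_V_le _ n r)
      _ = 2 * (r + 1) * V (Fintype.card β) (n + 1) (r + 1) := by ring

lemma mul_sum_card_hammingBall_inter_le (S : Finset (Fin n → β)) (r : ℕ) :
    n * ∑ a ∈ S, ∑ b ∈ S, #(hammingBall a r ∩ hammingBall b r) ≤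
      n * (#S * V (Fintype.card β) n r) +
        #{x ∈ S.offDiag | hammingDist x.1 x.2 ≤ 2 * r} * (2 * r * V (Fintype.card β) n r) := by
  rw [← sum_product' (f := fun a b => #(hammingBall a r ∩ hammingBall b r)), mul_sum,
    ← diag_union_offDiag, sum_union (disjoint_diag_offDiag S)]
  have hdiag : ∑ x ∈ S.diag, n * #(hammingBall x.1 r ∩ hammingBall x.2 r) =
      n * (#S * V (Fintype.card β) n r) := by
    rw [sum_congr rfl fun x hx => by rw [(mem_diag.mp hx).2, inter_self, card_hammingBall],
      sum_const, diag_card, smul_eq_mul, mul_left_comm]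
  have hoffDiag : ∑ x ∈ S.offDiag, n * #(hammingBall x.1 r ∩ hammingBall x.2 r) ≤
      ∑ x ∈ S.offDiag, if hammingDist x.1 x.2 ≤ 2 * r then 2 * r * V (Fintype.card β) n r else 0 :=
    sum_le_sum fun x hx => by
      split_ifs with hclose
      · exact mul_card_hammingBall_inter_le (mem_offDiag.mp hx).2.2 r
      · rw [disjoint_iff_inter_eq_empty.mp (disjoint_hammingBall (by omega)), card_empty, mul_zero]
  rw [← sum_filter, sum_const, smul_eq_mul] at hoffDiag
  omega

theorem mul_sq_card_mul_V_le (S : Finset (Fin n → β)) (t : ℕ)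
    (hS : 2 * Fintype.card β ^ n ≤ #S * V (Fintype.card β) n t) :
    n * #S ^ 2 * V (Fintype.card β) n t ≤
      4 * t * Fintype.card β ^ n * #{x ∈ S.offDiag | hammingDist x.1 x.2 ≤ 2 * t} := by
  set N := Fintype.card β ^ n
  set Vt := V (Fintype.card β) n t
  set P := #{x ∈ S.offDiag | hammingDist x.1 x.2 ≤ 2 * t}
  set K : (Fin n → β) → ℕ := fun x => #{a ∈ S | x ∈ hammingBall a t}
  have hfirst : ∑ x, K x = #S * Vt := by
    rw [sum_card_filter_mem]
    simp [card_hammingBall, Vt]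
  have hsecond : n * ∑ x, K x ^ 2 ≤ n * (#S * Vt) + P * (2 * t * Vt) := by
    rw [sum_sq_card_filter_mem]
    exact mul_sum_card_hammingBall_inter_le S t
  have hCS : (#S * Vt) ^ 2 ≤ N * ∑ x, K x ^ 2 := by
    simpa [hfirst, N] using sq_sum_le_card_mul_sum_sq (s := univ) (f := K)
  have hupper : n * (#S * Vt) ^ 2 ≤ N * (n * (#S * Vt)) + N * (P * (2 * t * Vt)) :=
    calc n * (#S * Vt) ^ 2 ≤ n * (N * ∑ x, K x ^ 2) := Nat.mul_le_mul_left n hCS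
      _ = N * (n * ∑ x, K x ^ 2) := by ring
      _ ≤ N * (n * (#S * Vt) + P * (2 * t * Vt)) := Nat.mul_le_mul_left N hsecond
      _ = _ := by ring
  have hlower : 2 * (N * (n * (#S * Vt))) ≤ n * (#S * Vt) ^ 2 :=
    calc 2 * (N * (n * (#S * Vt))) = 2 * N * (n * (#S * Vt)) := by ring
      _ ≤ #S * Vt * (n * (#S * Vt)) := Nat.mul_le_mul_right _ hS
      _ = _ := by ring
  refine Nat.le_of_mul_le_mul_right ?_ (V_pos (Fintype.card β) n t)
  calc n * #S ^ 2 * Vt * Vt = n * (#S * Vt) ^ 2 := by ring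
    _ ≤ 2 * (N * (P * (2 * t * Vt))) := by linarith
    _ = 4 * t * N * P * Vt := by ring

end Supersaturation

theorem stmt13_general (q n t : ℕ) (hq : 2 ≤ q) (ht : 1 ≤ t)
    (S : Finset (Fin n → Fin q))
    (hS : 2 * q ^ n ≤ S.card * V q n t)
    (E : Finset (Sym2 (Fin n → Fin q)))
    (hE : E = S.sym2.filter (fun e => ¬ e.IsDiag ∧ hdist2 e ≤ 2 * t)) :
    ((q : ℚ) - 1) * n * S.card ^ 2 * V q n t / (10 * q * t * q ^ n) ≤ (E.card : ℚ) ∧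
    (n : ℚ) * S.card ^ 2 * V q n t / (20 * t * q ^ n) ≤ (E.card : ℚ) := by
  have hpairs : #{x ∈ S.offDiag | hammingDist x.1 x.2 ≤ 2 * t} = 2 * #E := by
    rw [hE]
    exact card_offDiag_filter_eq_two_mul S (fun e => hdist2 e ≤ 2 * t)
  have hmain := mul_sq_card_mul_V_le S t (by simpa using hS)
  rw [hpairs, Fintype.card_fin] at hmain
  have hmainQ : (n : ℚ) * #S ^ 2 * V q n t ≤ 8 * t * q ^ n * #E := by
    exact_mod_cast hmain.trans_eq (by ring)
  have hq0 : (0 : ℚ) < q := by exact_mod_cast (by omega : 0 < q)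
  have ht0 : (0 : ℚ) < t := by exact_mod_cast ht
  have hA : (0 : ℚ) ≤ n * #S ^ 2 * V q n t := by positivity
  have hB : (0 : ℚ) ≤ t * q ^ n * #E := by positivity
  constructor
  · rw [div_le_iff₀ (by positivity)]
    nlinarith
  · rw [div_le_iff₀ (by positivity)]
    nlinarith

theorem stmt13 (q n t : ℕ) (hq : 2 ≤ q) (hn : 2 ≤ n) (ht : 1 ≤ t) (htn : 2 * t ≤ n)
    (S : Finset (Fin n → Fin q))
    (hS : 2 * q ^ n ≤ S.card * V q n t)
    (E : Finset (Sym2 (Fin n → Fin q)))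
    (hE : E = S.sym2.filter (fun e => ¬ e.IsDiag ∧ hdist2 e ≤ 2 * t)) :
    ((q : ℚ) - 1) * n * S.card ^ 2 * V q n t / (10 * q * t * q ^ n) ≤ (E.card : ℚ) ∧
    (n : ℚ) * S.card ^ 2 * V q n t / (20 * t * q ^ n) ≤ (E.card : ℚ) :=
  stmt13_general q n t hq ht S hS E hE
end

section
/- (Injection lemma for ball intersections) Let u = 1^n, v = 2^k 1^{n−k}, and w = 2^{k+1} 1^{n−k−1} in [q]^n, with 0 ≤ k ≤ t and k+1 ≤ n. Then there is an injection from B(u,t) ∩ B(w,t) \ B(v,t) into B(u,t) ∩ B(v,t) \ B(w,t) given by changing the (k+1)st coordinate from 2 to 1; consequently |B(u,t) ∩ B(w,t)| ≤ |B(u,t) ∩ B(v,t)|. -/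
/-! `v` and `w` differ only in coordinate `k`, where `u` and `v` agree. A word within distance `t`
of `w` but not of `v` must therefore carry `w`'s symbol at `k`; resetting it to the symbol of `u`
and `v` brings the word one step closer to `u` and `v` and one step further from `w`. The reset
is injective because the old symbol is known, and comparing the two difference sets compares the
two intersections, since both share `B(u,t) ∩ B(v,t) ∩ B(w,t)`. -/

open Finset Function

theorem card_inter_le_card_inter_of_card_sdiff_le {α : Type*} [DecidableEq α] {s t r : Finset α}
    (h : #((s ∩ t) \ r) ≤ #((s ∩ r) \ t)) : #(s ∩ t) ≤ #(s ∩ r) := by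
  have hsdiff : ∀ a b : Finset α, (s ∩ a) \ (s ∩ b) = (s ∩ a) \ b := by
    intro a b; ext; simp only [mem_sdiff, mem_inter]; tauto
  rwa [← hsdiff, ← hsdiff r, card_sdiff_le_card_sdiff_iff] at h

theorem injOn_update_of_eq {ι : Type*} [DecidableEq ι] {β : ι → Type*} {s : Set (∀ i, β i)}
    {i : ι} {a c : β i}
    (hs : ∀ x ∈ s, x i = a) : Set.InjOn (fun x => update x i c) s := by
  intro x hx y hy hxy
  rw [← update_eq_self i x, ← update_eq_self i y, hs x hx, hs y hy, ← update_idem c a x,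
    ← update_idem c a y]
  exact congrArg (update · i a) hxy

section Hamming

variable {ι : Type*} [Fintype ι] [DecidableEq ι] {β : ι → Type*} [∀ i, DecidableEq (β i)]

theorem hammingDist_add_ite_eq_of_forall_ne {a x y : ∀ i, β i} {i : ι}
    (h : ∀ j ≠ i, x j = y j) :
    hammingDist a x + (if a i ≠ y i then 1 else 0) =
      hammingDist a y + (if a i ≠ x i then 1 else 0) := by
  simp only [hammingDist, card_filter, ← sum_erase_add _ _ (mem_univ i)]
  rw [sum_congr rfl fun j hj => by rw [h j (ne_of_mem_erase hj)]]
  ring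

theorem hammingDist_update_add_ite (a x : ∀ i, β i) (i : ι) (c : β i) :
    hammingDist a (update x i c) + (if a i ≠ x i then 1 else 0) =
      hammingDist a x + (if a i ≠ c then 1 else 0) := by
  simpa only [update_self] using
    hammingDist_add_ite_eq_of_forall_ne (a := a) (y := x) fun j hj => update_of_ne hj c x

theorem eq_and_hammingDist_eq_succ_of_lt {v w x : ∀ i, β i} {i : ι}
    (hvw : ∀ j ≠ i, v j = w j) (hlt : hammingDist w x < hammingDist v x) :
    x i = w i ∧ x i ≠ v i ∧ hammingDist v x = hammingDist w x + 1 := by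
  have key := hammingDist_add_ite_eq_of_forall_ne (a := x) hvw
  rw [hammingDist_comm x v, hammingDist_comm x w] at key
  split_ifs at key with hxw hxv hxv
  · omega
  · omega
  · exact ⟨not_not.1 hxw, hxv, by omega⟩
  · omega

end Hamming

section Balls

variable {q n t : ℕ} {u v w : Fin n → Fin q} {i : Fin n} {c : Fin q}

theorem mem_ball {a x : Fin n → Fin q} {r : ℕ} : x ∈ ball a r ↔ hammingDist a x ≤ r := by
  simp [ball]

theorem update_mem_ball_inter_sdiff (hvw : ∀ j ≠ i, v j = w j) (hu : u i = c) (hv : v i = c) :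
    ∀ x ∈ (ball u t ∩ ball w t) \ ball v t, update x i c ∈ (ball u t ∩ ball v t) \ ball w t := by
  intro x hx
  simp only [mem_sdiff, mem_inter, mem_ball, not_le] at hx ⊢
  obtain ⟨⟨hux, hwx⟩, hvx⟩ := hx
  obtain ⟨hxw, hxv, hdist⟩ := eq_and_hammingDist_eq_succ_of_lt hvw (hwx.trans_lt hvx)
  have hxc : x i ≠ c := hv ▸ hxv
  have hu' := hammingDist_update_add_ite u x i c
  have hv' := hammingDist_update_add_ite v x i c
  have hw' := hammingDist_update_add_ite w x i c
  simp only [hu, hv, ← hxw, ne_eq, hxc, not_false_eq_true, not_true_eq_false, if_true,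
    if_false, Ne.symm hxc] at hu' hv' hw'
  omega

theorem injOn_update_ball_inter_sdiff (hvw : ∀ j ≠ i, v j = w j) :
    Set.InjOn (fun x : Fin n → Fin q => update x i c) ↑((ball u t ∩ ball w t) \ ball v t) := by
  refine injOn_update_of_eq (β := fun _ => Fin q) (a := w i) fun x hx => ?_
  simp only [coe_sdiff, coe_inter, Set.mem_sdiff, Set.mem_inter_iff, mem_coe, mem_ball,
    not_le] at hx
  exact (eq_and_hammingDist_eq_succ_of_lt hvw (hx.1.2.trans_lt hx.2)).1

end Balls

theorem stmt16_general (q n t k : ℕ) [NeZero q] (hkn : k + 1 ≤ n)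
    (u v w : Fin n → Fin q) (hu : u = stdVec q n 0) (hv : v = stdVec q n k)
    (hw : w = stdVec q n (k + 1))
    (φ : (Fin n → Fin q) → (Fin n → Fin q))
    (hφ : φ = fun x => Function.update x (⟨k, hkn⟩ : Fin n) 0) :
    (∀ x ∈ (ball u t ∩ ball w t) \ ball v t, φ x ∈ (ball u t ∩ ball v t) \ ball w t) ∧
    Set.InjOn φ ((ball u t ∩ ball w t) \ ball v t : Finset (Fin n → Fin q)) ∧
    (ball u t ∩ ball w t).card ≤ (ball u t ∩ ball v t).card := by
  set i : Fin n := ⟨k, hkn⟩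
  have hvw : ∀ j ≠ i, v j = w j := by
    intro j hj
    have hjk : (j : ℕ) ≠ k := fun h => hj (Fin.ext h)
    simp only [hv, hw, stdVec]
    split_ifs <;> first | rfl | omega
  have hui : u i = 0 := by simp [hu, stdVec]
  have hvi : v i = 0 := by simp [hv, stdVec, i]
  have hmaps := update_mem_ball_inter_sdiff (t := t) hvw hui hvi
  have hinj := injOn_update_ball_inter_sdiff (u := u) (t := t) (c := 0) hvw
  subst hφ
  exact ⟨hmaps, hinj, card_inter_le_card_inter_of_card_sdiff_le
    (card_le_card_of_injOn _ hmaps hinj)⟩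

theorem stmt16 (q n t k : ℕ) [NeZero q] (hq : 2 ≤ q) (hn : 1 ≤ n) (hkt : k ≤ t)
    (hkn : k + 1 ≤ n)
    (u v w : Fin n → Fin q) (hu : u = stdVec q n 0) (hv : v = stdVec q n k)
    (hw : w = stdVec q n (k + 1))
    (φ : (Fin n → Fin q) → (Fin n → Fin q))
    (hφ : φ = fun x => Function.update x (⟨k, hkn⟩ : Fin n) 0) :
    (∀ x ∈ (ball u t ∩ ball w t) \ ball v t, φ x ∈ (ball u t ∩ ball v t) \ ball w t) ∧
    Set.InjOn φ ((ball u t ∩ ball w t) \ ball v t : Finset (Fin n → Fin q)) ∧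
    (ball u t ∩ ball w t).card ≤ (ball u t ∩ ball v t).card :=
  stmt16_general q n t k hkn u v w hu hv hw φ hφ
end
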